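/- Over an algebraically closed field of characteristic 2, there are exactly two restricted structures on the 3-dimensional Heisenberg Lie algebra up to restricted isomorphism, given by the linear forms θ = 0 and θ = z*. -/

import Mathlib

/-- The 2-map on the 3-dimensional Heisenberg algebra in characteristic 2 determined
by a linear form `θ`: `(a x + b y + c z)^{[2]} = (a²θ(x) + b²θ(y) + c²θ(z) + ab) z`. -/
noncomputable def heisTwoMap {F h : Type*} [Field F] [LieRing h] [LieAlgebra F h]
    (B : Module.Basis (Fin 3) F h) (θ : h →ₗ[F] F) : h → h :=
  fun v => (B.repr v 0 ^ 2 * θ (B 0) + B.repr v 1 ^ 2 * θ (B 1) + B.repr v 2 ^ 2 * θ (B 2)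
      + B.repr v 0 * B.repr v 1) • B 2

/-- Restricted isomorphism of `(h, θ)` and `(h, θ')` in characteristic 2. -/
noncomputable def HeisRIso2 {F h : Type*} [Field F] [LieRing h] [LieAlgebra F h]
    (B : Module.Basis (Fin 3) F h) (θ θ' : h →ₗ[F] F) : Prop :=
  ∃ φ : h ≃ₗ[F] h, (∀ u v : h, φ ⁅u, v⁆ = ⁅φ u, φ v⁆) ∧
    ∀ v : h, φ (heisTwoMap B θ v) = heisTwoMap B θ' (φ v)

/-!
A Lie automorphism `φ` scales the centre: `φ z = ⁅φ x, φ y⁆ = c z` with `c ≠ 0`, and comparing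
`φ (z^{[2]})` with `(φ z)^{[2]}` gives `θ(z) = c θ'(z)`. So whether `θ` vanishes on `z` is a
restricted invariant, which separates `θ = 0` from `θ = z*`.

Conversely, with `γ = θ(z) ≠ 0`, the map `x ↦ x + s z`, `y ↦ γ y + t z`, `z ↦ γ z` with
`s² = γ θ(x)`, `t² = γ θ(y)` carries `θ` to `z*`; if `θ(z) = 0`, the map `x ↦ x + θ(x) y`,
`y ↦ m x + (1 + m θ(x)) y` with `θ(x) m² + m = θ(y)` carries `θ` to `0`. The square roots and
the root `m` exist because `F` is algebraically closed.
-/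

open Module Matrix Polynomial

theorem IsAlgClosed.exists_mul_sq_add_eq {K : Type*} [Field K] [IsAlgClosed K] (α β : K) :
    ∃ m : K, α * m ^ 2 + m = β := by
  obtain ⟨m, hm⟩ := IsAlgClosed.exists_root (C α * X ^ 2 + X - C β) fun hdeg => by
    simpa using congrArg (coeff · 1) (eq_C_of_degree_eq_zero hdeg)
  exact ⟨m, by simpa [sub_eq_zero] using hm⟩

section Heisenberg

variable {F h : Type*} [Field F] [LieRing h] [LieAlgebra F h] {B : Basis (Fin 3) F h}

theorem heis_lie_eq (hxy : ⁅B 0, B 1⁆ = B 2) (hxz : ⁅B 0, B 2⁆ = 0) (hyz : ⁅B 1, B 2⁆ = 0)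
    (u v : h) : ⁅u, v⁆ = (B.repr u 0 * B.repr v 1 - B.repr u 1 * B.repr v 0) • B 2 := by
  have hyx : ⁅B 1, B 0⁆ = -B 2 := by rw [← lie_skew, hxy]
  have hzx : ⁅B 2, B 0⁆ = 0 := by rw [← lie_skew, hxz, neg_zero]
  have hzy : ⁅B 2, B 1⁆ = 0 := by rw [← lie_skew, hyz, neg_zero]
  conv_lhs => rw [← B.sum_repr u, ← B.sum_repr v]
  simp only [Fin.sum_univ_three, add_lie, lie_add, smul_lie, lie_smul, lie_self, hxy, hxz, hyz,
    hyx, hzx, hzy]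
  module

theorem heisTwoMap_smul_basis_two (θ : h →ₗ[F] F) (c : F) :
    heisTwoMap B θ (c • B 2) = (c ^ 2 * θ (B 2)) • B 2 := by
  simp [heisTwoMap]

theorem HeisRIso2.apply_two_eq_zero_iff (hxy : ⁅B 0, B 1⁆ = B 2) (hxz : ⁅B 0, B 2⁆ = 0)
    (hyz : ⁅B 1, B 2⁆ = 0) {θ θ' : h →ₗ[F] F} (hiso : HeisRIso2 B θ θ') :
    θ (B 2) = 0 ↔ θ' (B 2) = 0 := by
  obtain ⟨φ, hlie, hmap⟩ := hiso
  obtain ⟨c, hφz⟩ : ∃ c : F, φ (B 2) = c • B 2 := by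
    have := heis_lie_eq hxy hxz hyz (φ (B 0)) (φ (B 1))
    rw [← hlie, hxy] at this
    exact ⟨_, this⟩
  have hc : c ≠ 0 := by
    rintro hc
    rw [hc, zero_smul, LinearEquiv.map_eq_zero_iff] at hφz
    exact B.ne_zero 2 hφz
  have hcoef : θ (B 2) * c = c ^ 2 * θ' (B 2) := by
    have := hmap (B 2)
    rw [← one_smul F (B 2), heisTwoMap_smul_basis_two, one_pow, one_mul, one_smul, map_smul, hφz,
      smul_smul, heisTwoMap_smul_basis_two] at this
    exact smul_left_injective F (B.ne_zero 2) this
  have hθ : θ (B 2) = c * θ' (B 2) := mul_right_cancel₀ hc (by linear_combination hcoef)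
  rw [hθ, mul_eq_zero, or_iff_right hc]

/-- The restricted isomorphism `x ↦ a x + b y + p z`, `y ↦ c x + d y + q z`, `z ↦ (ad - bc) z`.
In characteristic 2 squaring is additive and `ad + bc = ad - bc`, so compatibility with the
2-maps only has to be checked on `x`, `y` and `z`. -/
theorem heisRIso2_of_coeffs [CharP F 2] (hxy : ⁅B 0, B 1⁆ = B 2) (hxz : ⁅B 0, B 2⁆ = 0)
    (hyz : ⁅B 1, B 2⁆ = 0) (θ θ' : h →ₗ[F] F) (a b c d p q : F) (hδ : a * d - b * c ≠ 0)
    (hx : (a * d - b * c) * θ (B 0) =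
      a ^ 2 * θ' (B 0) + b ^ 2 * θ' (B 1) + p ^ 2 * θ' (B 2) + a * b)
    (hy : (a * d - b * c) * θ (B 1) =
      c ^ 2 * θ' (B 0) + d ^ 2 * θ' (B 1) + q ^ 2 * θ' (B 2) + c * d)
    (hz : θ (B 2) = (a * d - b * c) * θ' (B 2)) :
    HeisRIso2 B θ θ' := by
  set δ := a * d - b * c
  let M : Matrix (Fin 3) (Fin 3) F := !![a, c, 0; b, d, 0; p, q, δ]
  have hM : IsUnit M.det := by
    have hdet : M.det = δ ^ 2 := by simp [M, Matrix.det_fin_three]; ring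
    rw [isUnit_iff_ne_zero, hdet]
    exact pow_ne_zero 2 hδ
  set φ := M.toLinearEquiv B hM
  have hφ : ∀ v, B.repr (φ v) = M *ᵥ B.repr v := fun v => Matrix.repr_toLin _ _ _ _
  have hφz : φ (B 2) = δ • B 2 := by
    simp [φ, Matrix.toLin_self, M, Fin.sum_univ_three]
  refine ⟨φ, fun u v => ?_, fun v => ?_⟩
  · rw [heis_lie_eq hxy hxz hyz u v, heis_lie_eq hxy hxz hyz (φ u) (φ v), map_smul, hφz,
      smul_smul, hφ, hφ]
    congr 1
    simp only [M, δ, mulVec, dotProduct, Fin.sum_univ_three, of_apply, cons_val', cons_val_fin_one,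
      cons_val_zero, cons_val_one, cons_val, zero_mul, add_zero]
    ring
  · simp only [heisTwoMap, map_smul, hφz, smul_smul, hφ]
    congr 1
    simp only [M, δ, mulVec, dotProduct, Fin.sum_univ_three, of_apply, cons_val', cons_val_fin_one,
      cons_val_zero, cons_val_one, cons_val, zero_mul, add_zero]
    set v₀ := B.repr v 0
    set v₁ := B.repr v 1
    set v₂ := B.repr v 2
    linear_combination v₀ ^ 2 * hx + v₁ ^ 2 * hy + δ * v₂ ^ 2 * hz
      - (a * c * v₀ * v₁ * θ' (B 0) + b * d * v₀ * v₁ * θ' (B 1) + b * c * v₀ * v₁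
        + (p * q * v₀ * v₁ + p * δ * v₀ * v₂ + q * δ * v₁ * v₂) * θ' (B 2))
        * (CharTwo.two_eq_zero : (2 : F) = 0)

theorem heisRIso2_zero_of_apply_two_eq_zero [CharP F 2] [IsAlgClosed F]
    (hxy : ⁅B 0, B 1⁆ = B 2) (hxz : ⁅B 0, B 2⁆ = 0) (hyz : ⁅B 1, B 2⁆ = 0) {θ : h →ₗ[F] F}
    (hθ : θ (B 2) = 0) : HeisRIso2 B θ 0 := by
  obtain ⟨m, hm⟩ := IsAlgClosed.exists_mul_sq_add_eq (θ (B 0)) (θ (B 1))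
  have hδ : 1 * (1 + m * θ (B 0)) - θ (B 0) * m = 1 := by ring
  apply heisRIso2_of_coeffs hxy hxz hyz θ 0 1 (θ (B 0)) m (1 + m * θ (B 0)) 0 0 <;>
    simp only [hδ, LinearMap.zero_apply, hθ]
  · exact one_ne_zero
  · ring
  · linear_combination -hm
  · ring

theorem heisRIso2_coord_two_of_apply_two_ne_zero [CharP F 2] [IsAlgClosed F]
    (hxy : ⁅B 0, B 1⁆ = B 2) (hxz : ⁅B 0, B 2⁆ = 0) (hyz : ⁅B 1, B 2⁆ = 0) {θ : h →ₗ[F] F}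
    (hθ : θ (B 2) ≠ 0) : HeisRIso2 B θ (B.coord 2) := by
  obtain ⟨s, hs⟩ := IsAlgClosed.exists_pow_nat_eq (θ (B 2) * θ (B 0)) two_pos
  obtain ⟨t, ht⟩ := IsAlgClosed.exists_pow_nat_eq (θ (B 2) * θ (B 1)) two_pos
  apply heisRIso2_of_coeffs hxy hxz hyz θ (B.coord 2) 1 0 0 (θ (B 2)) s t <;>
    simp [hs, ht, hθ]

end Heisenberg

/-- Over an algebraically closed field of characteristic 2 there are
exactly two restricted structures on the 3-dimensional Heisenberg Lie algebra up to
restricted isomorphism, given by the linear forms `θ = 0` and `θ = z*`. -/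
theorem heisenberg_restricted_classification_char_two (F h : Type*) [Field F]
    [IsAlgClosed F] [CharP F 2]
    [LieRing h] [LieAlgebra F h] (B : Module.Basis (Fin 3) F h)
    (hxy : ⁅B 0, B 1⁆ = B 2) (hxz : ⁅B 0, B 2⁆ = 0) (hyz : ⁅B 1, B 2⁆ = 0) :
    ¬ HeisRIso2 B 0 (B.coord 2) ∧
    (∀ θ : h →ₗ[F] F, HeisRIso2 B θ 0 ∨ HeisRIso2 B θ (B.coord 2)) := by
  refine ⟨fun hiso => ?_, fun θ => ?_⟩
  · simpa using (hiso.apply_two_eq_zero_iff hxy hxz hyz).1 rfl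
  · by_cases hθ : θ (B 2) = 0
    · exact Or.inl (heisRIso2_zero_of_apply_two_eq_zero hxy hxz hyz hθ)
    · exact Or.inr (heisRIso2_coord_two_of_apply_two_ne_zero hxy hxz hyz hθ)
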